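/- Suppose Σ_{j∈Λ*_p} r_j + Σ_{j,k∈Λ*_p} a_{j,k} > 0. Then there exists a unique function ρ: Λ*_p → ℝ satisfying the system (*): 0 = r_j[α_j − ρ(j)] + (𝒞ρ)(j) + (𝒜ρ)(j) + (𝒯ρ)(j) for all j ∈ Λ*_p. -/

import Mathlib

open Finset

/- The sites of `Λ*_p = {-p, …, 0}` are indexed by `Fin (p+1)`, the index `i`
corresponding to the site `i - p`.  (For the discrete Laplacian `𝒯` to make
sense, `Λ*_p` must contain at least two sites, i.e. `1 ≤ p`.) -/

/-- `(𝒞ρ)(j) = Σ_k c_{j,k} [ρ(k) − ρ(j)]`. -/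
def CSum (p : ℕ) (cR : Fin (p+1) → Fin (p+1) → ℝ) (ρ : Fin (p+1) → ℝ)
    (j : Fin (p+1)) : ℝ :=
  ∑ k : Fin (p+1), cR j k * (ρ k - ρ j)

/-- `(𝒜ρ)(j) = Σ_k a_{j,k} [1 − ρ(k) − ρ(j)]`. -/
def ASum (p : ℕ) (aR : Fin (p+1) → Fin (p+1) → ℝ) (ρ : Fin (p+1) → ℝ)
    (j : Fin (p+1)) : ℝ :=
  ∑ k : Fin (p+1), aR j k * (1 - ρ k - ρ j)

/-- `(𝒯ρ)(j)`: Neumann discrete Laplacian on `Λ*_p` (index `0` is site `-p`,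
index `p` is site `0`). -/
def TSum (p : ℕ) (hp : 1 ≤ p) (ρ : Fin (p+1) → ℝ) (j : Fin (p+1)) : ℝ :=
  if j.1 = 0 then ρ ⟨1, by omega⟩ - ρ ⟨0, by omega⟩
  else if h : j.1 = p then ρ ⟨p - 1, by omega⟩ - ρ ⟨p, by omega⟩
  else ρ ⟨j.1 + 1, by have := j.isLt; omega⟩ + ρ ⟨j.1 - 1, by omega⟩ - 2 * ρ j

/-! The system reads `L ρ = b`, where `L ρ = r ρ + Σ_k a_{jk} (ρ_k + ρ_j) − Σ_k w_{jk} (ρ_k − ρ_j)`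
and `w` adds the nearest-neighbour weights of `𝒯` to those of `𝒞`; as `L` is a linear
endomorphism of a finite-dimensional space, it suffices that it is injective.
If `L ρ = 0` and `|ρ|` attains its maximum `M` at a site where `ρ = M` (otherwise replace `ρ`
by `-ρ`), then at that site every `r`- and `a`-term of the equation is `≥ 0` and every
`w`-term is `≤ 0`, so all of them vanish: `ρ = M` at each neighbour. The path graph being
connected, `ρ ≡ M`, and then `(r_j + 2 Σ_k a_{jk}) M = 0` for all `j`, which forces
`M = 0` because `Σ r + Σ a > 0`. -/

section ScreenedLaplacian

variable {ι : Type*} [Fintype ι]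

def screenedLaplacian (r : ι → ℝ) (a w : ι → ι → ℝ) : (ι → ℝ) →ₗ[ℝ] (ι → ℝ) where
  toFun ρ j := r j * ρ j + ∑ k, a j k * (ρ k + ρ j) - ∑ k, w j k * (ρ k - ρ j)
  map_add' ρ σ := by
    ext j
    simp only [Pi.add_apply, add_add_add_comm, add_sub_add_comm, mul_add, sum_add_distrib]
    ring
  map_smul' t ρ := by
    ext j
    simp only [Pi.smul_apply, smul_eq_mul, RingHom.id_apply, ← mul_add, ← mul_sub,
      mul_left_comm _ t, ← mul_sum]

variable {r : ι → ℝ} {a w : ι → ι → ℝ}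

lemma screenedLaplacian_apply (ρ : ι → ℝ) (j : ι) :
    screenedLaplacian r a w ρ j
      = r j * ρ j + ∑ k, a j k * (ρ k + ρ j) - ∑ k, w j k * (ρ k - ρ j) :=
  rfl

section MaximumPrinciple

variable (hr : ∀ j, 0 ≤ r j) (ha : ∀ j k, 0 ≤ a j k) (hw : ∀ j k, 0 ≤ w j k)
  {ρ : ι → ℝ} (hρ : screenedLaplacian r a w ρ = 0) {M : ℝ} (hM : ∀ k, |ρ k| ≤ M)
include hr ha hw hρ hM

lemma terms_eq_zero_of_eq_max {j : ι} (hj : ρ j = M) :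
    r j * M = 0 ∧ (∀ k, a j k * (ρ k + M) = 0) ∧ ∀ k, w j k * (ρ k - M) = 0 := by
  have heq := congrFun hρ j
  rw [screenedLaplacian_apply, hj, Pi.zero_apply] at heq
  have hrM : 0 ≤ r j * M := mul_nonneg (hr j) ((abs_nonneg _).trans (hM j))
  have hA : ∀ k ∈ univ, 0 ≤ a j k * (ρ k + M) := fun k _ ↦
    mul_nonneg (ha j k) (by linarith [neg_abs_le (ρ k), hM k])
  have hW : ∀ k ∈ univ, w j k * (ρ k - M) ≤ 0 := fun k _ ↦
    mul_nonpos_of_nonneg_of_nonpos (hw j k) (by linarith [le_abs_self (ρ k), hM k])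
  have hAsum := sum_nonneg hA
  have hWsum := sum_nonpos hW
  refine ⟨by linarith, fun k ↦ ?_, fun k ↦ ?_⟩
  · exact (sum_eq_zero_iff_of_nonneg hA).1 (by linarith) k (mem_univ k)
  · exact (sum_eq_zero_iff_of_nonpos hW).1 (by linarith) k (mem_univ k)

lemma eq_max_of_preconnected {G : SimpleGraph ι} (hG : G.Preconnected)
    (hGw : ∀ j k, G.Adj j k → 0 < w j k) {j : ι} (hj : ρ j = M) (k : ι) : ρ k = M := by
  induction (SimpleGraph.reachable_iff_reflTransGen j k).1 (hG j k) with
  | refl => exact hj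
  | @tail i i' _ hadj ih =>
    have hzero := (terms_eq_zero_of_eq_max hr ha hw hρ hM ih).2.2 i'
    exact sub_eq_zero.1 ((mul_eq_zero.1 hzero).resolve_left (hGw _ _ hadj).ne')

lemma max_eq_zero_of_preconnected {G : SimpleGraph ι} (hG : G.Preconnected)
    (hGw : ∀ j k, G.Adj j k → 0 < w j k) (hpos : 0 < ∑ j, r j + ∑ j, ∑ k, a j k)
    {j : ι} (hj : ρ j = M) : M = 0 := by
  have hconst := eq_max_of_preconnected hr ha hw hρ hM hG hGw hj
  have hterms := fun i ↦ terms_eq_zero_of_eq_max hr ha hw hρ hM (hconst i)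
  by_contra hM0
  have hr0 : ∀ i, r i = 0 := fun i ↦ (mul_eq_zero.1 (hterms i).1).resolve_right hM0
  have ha0 : ∀ i k, a i k = 0 := fun i k ↦ by
    have h := (hterms i).2.1 k
    rw [hconst k] at h
    exact (mul_eq_zero.1 h).resolve_right (by simpa [← two_mul] using hM0)
  simp [hr0, ha0] at hpos

end MaximumPrinciple

theorem screenedLaplacian_bijective (hr : ∀ j, 0 ≤ r j) (ha : ∀ j k, 0 ≤ a j k)
    (hw : ∀ j k, 0 ≤ w j k) {G : SimpleGraph ι} (hG : G.Preconnected)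
    (hGw : ∀ j k, G.Adj j k → 0 < w j k) (hpos : 0 < ∑ j, r j + ∑ j, ∑ k, a j k) :
    Function.Bijective (screenedLaplacian r a w) := by
  suffices hinj : Function.Injective (screenedLaplacian r a w) from
    ⟨hinj, LinearMap.injective_iff_surjective.1 hinj⟩
  rw [← LinearMap.ker_eq_bot, LinearMap.ker_eq_bot']
  intro ρ hρ
  ext k
  have : Nonempty ι := ⟨k⟩
  obtain ⟨i, hi⟩ := Finite.exists_max fun k ↦ |ρ k|
  have hmax : |ρ i| = 0 := by
    rcases abs_choice (ρ i) with habs | habs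
    · exact max_eq_zero_of_preconnected hr ha hw hρ hi hG hGw hpos habs.symm
    · refine max_eq_zero_of_preconnected hr ha hw (ρ := -ρ) (by rw [map_neg, hρ, neg_zero])
        (by simpa using hi) hG hGw hpos (j := i) (by simp [habs])
  exact abs_nonpos_iff.1 (hmax ▸ hi k)

end ScreenedLaplacian

open SimpleGraph Classical in
lemma TSum_eq_sum_adjMatrix (p : ℕ) (hp : 1 ≤ p) (ρ : Fin (p+1) → ℝ) (j : Fin (p+1)) :
    TSum p hp ρ j = ∑ k, (pathGraph (p+1)).adjMatrix ℝ j k * (ρ k - ρ j) := by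
  obtain ⟨i, hi⟩ := j
  simp only [adjMatrix_apply, boole_mul, ← sum_filter, TSum]
  split_ifs with h0 hp'
  · subst h0
    have : univ.filter ((pathGraph (p+1)).Adj ⟨0, hi⟩) = {⟨1, by omega⟩} := by
      ext k; simp only [mem_filter, mem_univ, true_and, pathGraph_adj, mem_singleton, Fin.ext_iff]
      omega
    rw [this, sum_singleton]
  · subst hp'
    have : univ.filter ((pathGraph (i+1)).Adj ⟨i, hi⟩) = {⟨i - 1, by omega⟩} := by
      ext k; simp only [mem_filter, mem_univ, true_and, pathGraph_adj, mem_singleton, Fin.ext_iff]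
      omega
    rw [this, sum_singleton]
  · have : univ.filter ((pathGraph (p+1)).Adj ⟨i, hi⟩)
        = {⟨i + 1, by omega⟩, ⟨i - 1, by omega⟩} := by
      ext k
      simp only [mem_filter, mem_univ, true_and, pathGraph_adj, mem_insert, mem_singleton,
        Fin.ext_iff]
      omega
    rw [this, sum_pair (by simp only [ne_eq, Fin.ext_iff]; omega)]
    ring

open Classical in
lemma system_iff_screenedLaplacian_eq (p : ℕ) (hp : 1 ≤ p)
    (r α : Fin (p+1) → ℝ) (cR aR : Fin (p+1) → Fin (p+1) → ℝ) (ρ : Fin (p+1) → ℝ) :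
    (∀ j, 0 = r j * (α j - ρ j) + CSum p cR ρ j + ASum p aR ρ j + TSum p hp ρ j) ↔
      screenedLaplacian r aR (fun j k ↦ cR j k + (SimpleGraph.pathGraph (p+1)).adjMatrix ℝ j k) ρ
        = fun j ↦ r j * α j + ∑ k, aR j k := by
  simp only [funext_iff, screenedLaplacian_apply, TSum_eq_sum_adjMatrix, CSum, ASum,
    add_mul, sum_add_distrib]
  refine forall_congr' fun j ↦ ?_
  have hA : ∑ k, aR j k * (1 - ρ k - ρ j) = ∑ k, aR j k - ∑ k, aR j k * (ρ k + ρ j) := by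
    rw [← sum_sub_distrib]; exact sum_congr rfl fun k _ ↦ by ring
  rw [hA]
  constructor <;> intro h <;> linarith

theorem stmt5_general (p : ℕ) (hp : 1 ≤ p)
    (r α : Fin (p+1) → ℝ) (cR aR : Fin (p+1) → Fin (p+1) → ℝ)
    (hr : ∀ j, 0 ≤ r j)
    (hc : ∀ j k, 0 ≤ cR j k) (ha : ∀ j k, 0 ≤ aR j k)
    (hpos : 0 < (∑ j, r j) + ∑ j, ∑ k, aR j k) :
    ∃! ρ : Fin (p+1) → ℝ,
      ∀ j : Fin (p+1),
        0 = r j * (α j - ρ j) + CSum p cR ρ j + ASum p aR ρ j + TSum p hp ρ j := by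
  classical
  let G := SimpleGraph.pathGraph (p+1)
  have hw : ∀ j k, 0 ≤ cR j k + G.adjMatrix ℝ j k := fun j k ↦
    add_nonneg (hc j k) (by simp only [SimpleGraph.adjMatrix_apply]; positivity)
  have hGw : ∀ j k, G.Adj j k → 0 < cR j k + G.adjMatrix ℝ j k := fun j k hjk ↦ by
    simp only [SimpleGraph.adjMatrix_apply, if_pos hjk]
    linarith [hc j k]
  simpa only [system_iff_screenedLaplacian_eq] using
    (screenedLaplacian_bijective hr ha hw (SimpleGraph.pathGraph_preconnected _) hGw hpos).existsUnique _

/-- if `Σ_j r_j + Σ_{j,k} a_{j,k} > 0`, the system (*)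
`0 = r_j[α_j − ρ(j)] + (𝒞ρ)(j) + (𝒜ρ)(j) + (𝒯ρ)(j)` has a unique solution. -/
theorem stmt5 (p : ℕ) (hp : 1 ≤ p)
    (r α : Fin (p+1) → ℝ) (cR aR : Fin (p+1) → Fin (p+1) → ℝ)
    (hr : ∀ j, 0 ≤ r j) (hα0 : ∀ j, 0 ≤ α j) (hα1 : ∀ j, α j ≤ 1)
    (hc : ∀ j k, 0 ≤ cR j k) (ha : ∀ j k, 0 ≤ aR j k)
    (hcd : ∀ j, cR j j = 0) (had : ∀ j, aR j j = 0)
    (hpos : 0 < (∑ j, r j) + ∑ j, ∑ k, aR j k) :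
    ∃! ρ : Fin (p+1) → ℝ,
      ∀ j : Fin (p+1),
        0 = r j * (α j - ρ j) + CSum p cR ρ j + ASum p aR ρ j + TSum p hp ρ j :=
  stmt5_general p hp r α cR aR hr hc ha hpos
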